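/- Define ρ(a,b,c) = ξ_a(b)/ξ_a(c) for 0 ≤ a < 1 and ρ(1,b,c) = (1-b)/(1-c), where ξ_a(t) = ζ_t(t) - ζ_t(a) and ζ_t(s) = s + (1-t)ln(1-s). If 0 ≤ a < c < b ≤ 1, then ρ(a,b,c) > (b-a)/(c-a); if 0 ≤ c < b < a < 1, then ρ(a,b,c) < (a-b)/(a-c). -/

import Mathlib

noncomputable def zeta (t s : ℝ) : ℝ := s + (1 - t) * Real.log (1 - s)
noncomputable def xi (s t : ℝ) : ℝ := zeta t t - zeta t s
noncomputable def rho (a b c : ℝ) : ℝ := if a < 1 then xi a b / xi a c else (1 - b) / (1 - c)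

/-!
The function `ξ_a` is continuous on `(-∞, 1]`: `x log x → 0` as `x → 0`, which is also the value
that `log 0 = 0` gives at `t = 1`. Its derivative `log (1 - a) - log (1 - t)` is strictly
increasing on `(-∞, 1)`, so `ξ_a` is strictly convex on `(-∞, 1]`. Since `ξ_a(a) = 0`, the secant
slope `ξ_a(t) / (t - a)` is strictly increasing in `t`. For `a < 1`, `ξ_a` is positive away from `a`
(by `log x < x - 1`), so comparing the slopes at `c` and `b` gives both inequalities.
-/

open Real Set

lemma xi_eq (a t : ℝ) :
    xi a t = (1 - t) * log (1 - t) + t - a - (1 - t) * log (1 - a) := by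
  simp only [xi, zeta]
  ring

lemma xi_self (a : ℝ) : xi a a = 0 := sub_self _

lemma continuous_xi (a : ℝ) : Continuous (xi a) := by
  simp only [funext (xi_eq a)]
  fun_prop

lemma hasDerivAt_xi (a : ℝ) {t : ℝ} (ht : t < 1) :
    HasDerivAt (xi a) (log (1 - a) - log (1 - t)) t := by
  have h1 : HasDerivAt (fun t : ℝ => 1 - t) (-1) t := by
    simpa using (hasDerivAt_id t).const_sub 1
  have hmul : HasDerivAt (fun t : ℝ => (1 - t) * log (1 - t)) ((log (1 - t) + 1) * -1) t :=
    (hasDerivAt_mul_log (by linarith)).comp t h1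
  rw [funext (xi_eq a)]
  exact ((hmul.fun_add (hasDerivAt_id' t)).sub_const a).fun_sub (h1.mul_const (log (1 - a)))
    |>.congr_deriv (by ring)

lemma strictConvexOn_xi (a : ℝ) : StrictConvexOn ℝ (Iic 1) (xi a) := by
  refine StrictMonoOn.strictConvexOn_of_deriv (convex_Iic 1) (continuous_xi a).continuousOn ?_
  rw [interior_Iic]
  intro x (hx : x < 1) y (hy : y < 1) hxy
  rw [(hasDerivAt_xi a hx).deriv, (hasDerivAt_xi a hy).deriv]
  have : log (1 - y) < log (1 - x) := log_lt_log (by linarith) (by linarith)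
  linarith

lemma xi_pos {a t : ℝ} (ha : a < 1) (ht : t < 1) (hta : t ≠ a) : 0 < xi a t := by
  have h1t : 0 < 1 - t := by linarith
  have hlog : log ((1 - a) / (1 - t)) < (1 - a) / (1 - t) - 1 :=
    log_lt_sub_one_of_pos (by positivity) <| by
      rw [Ne, div_eq_one_iff_eq h1t.ne']
      intro h
      exact hta (by linarith)
  rw [log_div (by linarith) h1t.ne', div_sub_one h1t.ne', lt_div_iff₀ h1t] at hlog
  rw [xi_eq]
  linarith

lemma xi_div_sub_lt {a b c : ℝ} (ha : a ≤ 1) (hb : b ≤ 1) (hcb : c < b) (hca : c ≠ a)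
    (hba : b ≠ a) : xi a c / (c - a) < xi a b / (b - a) := by
  simpa only [xi_self, sub_zero] using
    (strictConvexOn_xi a).secant_strict_mono (a := a) ha (by simp only [mem_Iic]; linarith) hb
      hca hba hcb

lemma div_lt_rho {a b c : ℝ} (hac : a < c) (hcb : c < b) (hb : b ≤ 1) :
    (b - a) / (c - a) < rho a b c := by
  have ha : a < 1 := by linarith
  have hslope := xi_div_sub_lt ha.le hb hcb hac.ne' (by linarith)
  rw [div_lt_div_iff₀ (by linarith) (by linarith)] at hslope
  rw [rho, if_pos ha, div_lt_div_iff₀ (by linarith) (xi_pos ha (by linarith) hac.ne')]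
  linarith

lemma rho_lt_div {a b c : ℝ} (hcb : c < b) (hba : b < a) (ha : a < 1) :
    rho a b c < (a - b) / (a - c) := by
  have hslope := xi_div_sub_lt ha.le (by linarith) hcb (by linarith) hba.ne
  rw [← neg_div_neg_eq, ← neg_div_neg_eq (xi a b), neg_sub, neg_sub,
    div_lt_div_iff₀ (by linarith) (by linarith)] at hslope
  rw [rho, if_pos ha, div_lt_div_iff₀ (xi_pos ha (by linarith) (by linarith)) (by linarith)]
  linarith

theorem stmt6 (a b c : ℝ) :
    (0 ≤ a → a < c → c < b → b ≤ 1 → rho a b c > (b - a) / (c - a)) ∧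
    (0 ≤ c → c < b → b < a → a < 1 → rho a b c < (a - b) / (a - c)) :=
  ⟨fun _ hac hcb hb => div_lt_rho hac hcb hb, fun _ hcb hba ha => rho_lt_div hcb hba ha⟩
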